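/- arXiv:math/9907108 — 2 statements merged into one kernel-verified Lean document; each statement's English description precedes it below -/
import Mathlib

section
/- Let k ≥ 3 and let G be the group with presentation ⟨a, b | a^{2k} b^{2k} = 1, and a^{2k-i} b^i = 1 and b^{2k-i} a^i = 1 for i = 2 and i = 3⟩. Then a = b in G. -/
/-! Since `2k - 2 = (2k - 3) + 1`, the relation `a^{2k-3} b^3 = 1` gives `a^{2k-3} b^2 = b⁻¹`, and
substituting this into `a^{2k-2} b^2 = a (a^{2k-3} b^2) = 1` leaves `a b⁻¹ = 1`. -/

/-- The relations of the presentation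
`⟨a, b | a^{2k}b^{2k}, a^{2k-2}b^2, b^{2k-2}a^2, a^{2k-3}b^3, b^{2k-3}a^3⟩`,
where `a = FreeGroup.of 0` and `b = FreeGroup.of 1`. -/
def nestRels (k : ℕ) : Set (FreeGroup (Fin 2)) :=
  { FreeGroup.of 0 ^ (2 * k) * FreeGroup.of 1 ^ (2 * k),
    FreeGroup.of 0 ^ (2 * k - 2) * FreeGroup.of 1 ^ 2,
    FreeGroup.of 1 ^ (2 * k - 2) * FreeGroup.of 0 ^ 2,
    FreeGroup.of 0 ^ (2 * k - 3) * FreeGroup.of 1 ^ 3,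
    FreeGroup.of 1 ^ (2 * k - 3) * FreeGroup.of 0 ^ 3 }

theorem eq_of_pow_succ_mul_pow_eq_one {G : Type*} [Group G] {a b : G} {n m : ℕ}
    (h₁ : a ^ (n + 1) * b ^ m = 1) (h₂ : a ^ n * b ^ (m + 1) = 1) : a = b := by
  have hb : a ^ n * b ^ m = b⁻¹ :=
    eq_inv_of_mul_eq_one_left (by rwa [pow_succ, ← mul_assoc] at h₂)
  rw [pow_succ', mul_assoc, hb] at h₁
  exact mul_inv_eq_one.mp h₁

/-- In `G = ⟨a, b | a^{2k}b^{2k} = 1, a^{2k-i}b^i = 1, b^{2k-i}a^i = 1 (i = 2, 3)⟩`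
with `k ≥ 3`, one has `a = b`. -/
theorem stmt0 (k : ℕ) (hk : 3 ≤ k) :
    (PresentedGroup.of 0 : PresentedGroup (nestRels k)) = PresentedGroup.of 1 := by
  have rel : ∀ r ∈ nestRels k, PresentedGroup.mk (nestRels k) r = 1 :=
    fun _ => PresentedGroup.one_of_mem
  have h₁ := rel (.of 0 ^ (2 * k - 2) * .of 1 ^ 2) (by simp [nestRels])
  have h₂ := rel (.of 0 ^ (2 * k - 3) * .of 1 ^ 3) (by simp [nestRels])
  rw [show 2 * k - 2 = 2 * k - 3 + 1 by omega] at h₁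
  simp only [map_mul, map_pow] at h₁ h₂
  exact eq_of_pow_succ_mul_pow_eq_one h₁ h₂
end

section
/- Let m ≥ 1 and consider the abelian group A = ℤ²/N where N is generated by (m, m), (2, m−2), (m−2, 2), (3, m−3), (m−3, 3). If m = 2k with k ≥ 3, then A ≅ ℤ/2k. -/
/-- For `m = 2k`, `k ≥ 3`, the quotient of `ℤ²` by the subgroup generated by
`(m,m), (2,m−2), (m−2,2), (3,m−3), (m−3,3)` (the abelianized relations of
`π₁(CP² \ (CA ∪ M))`) is cyclic of order `m = 2k`. -/
theorem stmt11 (k : ℕ) (hk : 3 ≤ k) :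
    Nonempty
      (((ℤ × ℤ) ⧸ AddSubgroup.closure
          { ((2 * k : ℤ), (2 * k : ℤ)), ((2 : ℤ), (2 * k - 2 : ℤ)),
            ((2 * k - 2 : ℤ), (2 : ℤ)), ((3 : ℤ), (2 * k - 3 : ℤ)),
            ((2 * k - 3 : ℤ), (3 : ℤ)) }) ≃+ ZMod (2 * k)) := by
  set S : Set (ℤ × ℤ) :=
    { ((2 * k : ℤ), (2 * k : ℤ)), ((2 : ℤ), (2 * k - 2 : ℤ)),
      ((2 * k - 2 : ℤ), (2 : ℤ)), ((3 : ℤ), (2 * k - 3 : ℤ)),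
      ((2 * k - 3 : ℤ), (3 : ℤ)) } with hS
  let f : ℤ × ℤ →+ ZMod (2 * k) :=
    { toFun := fun p => ((p.1 + p.2 : ℤ) : ZMod (2 * k))
      map_zero' := by simp
      map_add' := by
        intro p q
        simp only [Prod.fst_add, Prod.snd_add]
        push_cast; ring }
  have hf : ∀ p : ℤ × ℤ, f p = ((p.1 + p.2 : ℤ) : ZMod (2 * k)) := fun _ => rfl
  have hsurj : Function.Surjective f := by
    intro c
    obtain ⟨x, hx⟩ := ZMod.intCast_surjective c
    exact ⟨(x, 0), by simp [hf, hx]⟩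
  have hker : AddSubgroup.closure S = f.ker := by
    apply le_antisymm
    · rw [AddSubgroup.closure_le]
      intro p hp
      simp only [hS, Set.mem_insert_iff, Set.mem_singleton_iff] at hp
      rcases hp with h | h | h | h | h <;>
        subst h <;>
        simp only [SetLike.mem_coe, AddMonoidHom.mem_ker, hf,
          ZMod.intCast_zmod_eq_zero_iff_dvd] <;>
        push_cast
      · exact ⟨2, by ring⟩
      · exact ⟨1, by ring⟩
      · exact ⟨1, by ring⟩
      · exact ⟨1, by ring⟩
      · exact ⟨1, by ring⟩
    · intro p hp
      rw [AddMonoidHom.mem_ker, hf, ZMod.intCast_zmod_eq_zero_iff_dvd] at hp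
      obtain ⟨t, ht⟩ := hp
      push_cast at ht
      have hg2 : ((2 : ℤ), (2 * k - 2 : ℤ)) ∈ AddSubgroup.closure S :=
        AddSubgroup.subset_closure (by simp [hS])
      have hg4 : ((3 : ℤ), (2 * k - 3 : ℤ)) ∈ AddSubgroup.closure S :=
        AddSubgroup.subset_closure (by simp [hS])
      have h1 : ((1 : ℤ), (-1 : ℤ)) ∈ AddSubgroup.closure S := by
        have h := sub_mem hg4 hg2
        have e : ((3 : ℤ), (2 * k - 3 : ℤ)) - ((2 : ℤ), (2 * k - 2 : ℤ))
            = ((1 : ℤ), (-1 : ℤ)) := by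
          rw [Prod.ext_iff]; constructor <;> simp <;> ring
        rwa [e] at h
      have h0 : ((0 : ℤ), (2 * k : ℤ)) ∈ AddSubgroup.closure S := by
        have h := sub_mem hg2 (AddSubgroup.zsmul_mem _ h1 2)
        have e : ((2 : ℤ), (2 * k - 2 : ℤ)) - (2 : ℤ) • ((1 : ℤ), (-1 : ℤ))
            = ((0 : ℤ), (2 * k : ℤ)) := by
          rw [Prod.ext_iff]; constructor <;> simp <;> ring
        rwa [e] at h
      have hp' : p = p.1 • ((1 : ℤ), (-1 : ℤ)) + t • ((0 : ℤ), (2 * k : ℤ)) := by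
        rw [Prod.ext_iff]
        constructor <;> simp [smul_eq_mul] <;> linarith
      rw [hp']
      exact add_mem (AddSubgroup.zsmul_mem _ h1 p.1) (AddSubgroup.zsmul_mem _ h0 t)
  rw [hker]
  exact ⟨QuotientAddGroup.quotientKerEquivOfSurjective f hsurj⟩
end
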